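/- If a symmetric 2-covariant tensor T on an n-dimensional Lorentzian vector space has the dominant property and admits n linearly independent null eigenvectors, then T = λ g for some λ ≥ 0. -/

import Mathlib

/-- The Minkowski inner product of signature (+,-,...,-) on `Fin (n+1) → ℝ`. -/
def mink (n : ℕ) (v w : Fin (n + 1) → ℝ) : ℝ :=
  v 0 * w 0 - ∑ i : Fin n, v i.succ * w i.succ

/-- Causal future-directed vector. -/
def causalFD (n : ℕ) (v : Fin (n + 1) → ℝ) : Prop :=
  0 ≤ mink n v v ∧ 0 < v 0

/-!
Two orthogonal null vectors are proportional, so linearly independent null vectors are pairwise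
non-orthogonal. For a symmetric `T`, the relation
`λ_j g(X k, X j) = T(X k, X j) = T(X j, X k) = λ_k g(X j, X k)` then forces all eigenvalues to
agree, and since the `X k` span the space, `T = λ g`. Finally `λ = T(e₀, e₀) ≥ 0` by the dominant
property.
-/

open Submodule Set

section BilinForm

variable {K V ι : Type*} [CommRing K] [AddCommGroup V] [Module K V]
  {T G : LinearMap.BilinForm K V}

theorem eigenvalue_eq_of_apply_ne_zero [IsDomain K] (hT : ∀ v w, T v w = T w v)
    (hG : ∀ v w, G v w = G w v) {x y : V} {a b : K} (hx : ∀ v, T v x = a * G v x)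
    (hy : ∀ v, T v y = b * G v y) (hxy : G x y ≠ 0) : a = b := by
  have : a * G x y = b * G x y := by rw [← hy, hT, hx, hG]
  exact mul_right_cancel₀ hxy this

theorem eq_smul_of_apply_eq_smul_on_spanning {X : ι → V} (hX : span K (range X) = ⊤) {c : K}
    (h : ∀ k v, T v (X k) = c * G v (X k)) : T = c • G :=
  LinearMap.ext fun v => LinearMap.ext_on_range hX fun k => by simp [h]

theorem exists_eq_smul_of_spanning_eigenvectors [IsDomain K] [Nonempty ι]
    (hT : ∀ v w, T v w = T w v) (hG : ∀ v w, G v w = G w v) {X : ι → V}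
    (hX : span K (range X) = ⊤) (hXG : ∀ j k, j ≠ k → G (X j) (X k) ≠ 0)
    (heig : ∀ k, ∃ c : K, ∀ v, T v (X k) = c * G v (X k)) : ∃ c : K, T = c • G := by
  choose c hc using heig
  obtain ⟨i⟩ := ‹Nonempty ι›
  refine ⟨c i, eq_smul_of_apply_eq_smul_on_spanning hX fun k v => ?_⟩
  rw [hc]
  congr 1
  by_cases hki : k = i
  · rw [hki]
  · exact eigenvalue_eq_of_apply_ne_zero hT hG (hc k) (hc i) (hXG k i hki)

end BilinForm

section Minkowski

variable {n : ℕ}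

theorem mink_comm (v w : Fin (n + 1) → ℝ) : mink n v w = mink n w v := by
  simp [mink, mul_comm]

noncomputable def minkBilinForm (n : ℕ) : LinearMap.BilinForm ℝ (Fin (n + 1) → ℝ) :=
  LinearMap.mk₂ ℝ (mink n)
    (fun v v' w => by simp only [mink, Pi.add_apply, add_mul, Finset.sum_add_distrib]; ring)
    (fun c v w => by
      simp only [mink, Pi.smul_apply, smul_eq_mul, mul_sub, Finset.mul_sum, mul_assoc])
    (fun v w w' => by simp only [mink, Pi.add_apply, mul_add, Finset.sum_add_distrib]; ring)
    (fun c v w => by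
      simp only [mink, Pi.smul_apply, smul_eq_mul, mul_sub, Finset.mul_sum, mul_left_comm c])

@[simp]
theorem minkBilinForm_apply (v w : Fin (n + 1) → ℝ) : minkBilinForm n v w = mink n v w := rfl

theorem smul_eq_smul_of_null_of_mink_eq_zero {u v : Fin (n + 1) → ℝ} (hu : mink n u u = 0)
    (hv : mink n v v = 0) (huv : mink n u v = 0) : u 0 • v = v 0 • u := by
  have hsq : ∑ i : Fin n, (u 0 * v i.succ - v 0 * u i.succ) * (u 0 * v i.succ - v 0 * u i.succ)
      = 0 :=
    calc _ = u 0 * u 0 * ∑ i : Fin n, v i.succ * v i.succ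
          - 2 * u 0 * v 0 * ∑ i : Fin n, u i.succ * v i.succ
          + v 0 * v 0 * ∑ i : Fin n, u i.succ * u i.succ := by
          simp only [Finset.mul_sum, ← Finset.sum_sub_distrib, ← Finset.sum_add_distrib]
          exact Finset.sum_congr rfl fun i _ => by ring
      _ = 0 := by
          simp only [mink] at hu hv huv
          linear_combination (-(u 0 * u 0)) * hv + 2 * u 0 * v 0 * huv - v 0 * v 0 * hu
  have hspatial := (Finset.sum_mul_self_eq_zero_iff _ _).mp hsq
  funext j
  refine Fin.cases (mul_comm _ _) (fun i => ?_) j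
  simpa [sub_eq_zero] using hspatial i (Finset.mem_univ i)

theorem eq_zero_of_null_of_apply_zero_eq_zero {u : Fin (n + 1) → ℝ} (hu : mink n u u = 0)
    (h0 : u 0 = 0) : u = 0 := by
  have hsq : ∑ i : Fin n, u i.succ * u i.succ = 0 := by simpa [mink, h0] using hu
  have hspatial := (Finset.sum_mul_self_eq_zero_iff _ _).mp hsq
  funext j
  exact Fin.cases h0 (fun i => hspatial i (Finset.mem_univ i)) j

theorem mink_ne_zero_of_null_of_linearIndependent {u v : Fin (n + 1) → ℝ}
    (hu : mink n u u = 0) (hv : mink n v v = 0) (hind : LinearIndependent ℝ ![u, v]) :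
    mink n u v ≠ 0 := fun huv =>
  have htime := hind.eq_zero_of_pair' (smul_eq_smul_of_null_of_mink_eq_zero hu hv huv).symm
  hind.ne_zero 0 (eq_zero_of_null_of_apply_zero_eq_zero hu htime.2)

theorem causalFD_single_zero : causalFD n (Pi.single 0 1) := by
  simp [causalFD, mink, Fin.succ_ne_zero]

end Minkowski

theorem dominant_with_max_null_eigenvectors_is_conformal_general (n : ℕ)
    (T : (Fin (n + 1) → ℝ) →ₗ[ℝ] (Fin (n + 1) → ℝ) →ₗ[ℝ] ℝ)
    (hsymm : ∀ v w, T v w = T w v)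
    (hT : ∀ k₁ k₂, causalFD n k₁ → causalFD n k₂ → 0 ≤ T k₁ k₂)
    (X : Fin (n + 1) → Fin (n + 1) → ℝ) (hli : LinearIndependent ℝ X)
    (hnull : ∀ k, mink n (X k) (X k) = 0 ∧ X k ≠ 0)
    (heig : ∀ k, ∃ lam : ℝ, ∀ a, T a (X k) = lam * mink n a (X k)) :
    ∃ lam : ℝ, 0 ≤ lam ∧ ∀ v w, T v w = lam * mink n v w := by
  have hspan : span ℝ (range X) = ⊤ :=
    hli.span_eq_top_of_card_eq_finrank (by simp)
  have hXG : ∀ j k, j ≠ k → minkBilinForm n (X j) (X k) ≠ 0 := fun j k hjk =>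
    mink_ne_zero_of_null_of_linearIndependent (hnull j).1 (hnull k).1
      (LinearIndependent.pair_iff.mpr ((LinearIndepOn.pair_iff X hjk).mp (hli.linearIndepOn _)))
  obtain ⟨lam, hlam⟩ := exists_eq_smul_of_spanning_eigenvectors hsymm mink_comm hspan hXG heig
  have hTmink : ∀ v w, T v w = lam * mink n v w := fun v w => by simp [hlam]
  refine ⟨lam, ?_, hTmink⟩
  simpa [hTmink, mink, Fin.succ_ne_zero] using hT _ _ causalFD_single_zero causalFD_single_zero

/-- a symmetric tensor with the dominant property admitting `n + 1`
    (the dimension) linearly independent null eigenvectors is a nonnegative multiple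
    of the metric. -/
theorem dominant_with_max_null_eigenvectors_is_conformal (n : ℕ) (hn : 1 ≤ n)
    (T : (Fin (n + 1) → ℝ) →ₗ[ℝ] (Fin (n + 1) → ℝ) →ₗ[ℝ] ℝ)
    (hsymm : ∀ v w, T v w = T w v)
    (hT : ∀ k₁ k₂, causalFD n k₁ → causalFD n k₂ → 0 ≤ T k₁ k₂)
    (X : Fin (n + 1) → Fin (n + 1) → ℝ) (hli : LinearIndependent ℝ X)
    (hnull : ∀ k, mink n (X k) (X k) = 0 ∧ X k ≠ 0)
    (heig : ∀ k, ∃ lam : ℝ, ∀ a, T a (X k) = lam * mink n a (X k)) :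
    ∃ lam : ℝ, 0 ≤ lam ∧ ∀ v w, T v w = lam * mink n v w :=
  dominant_with_max_null_eigenvectors_is_conformal_general n T hsymm hT X hli hnull heig
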